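/- Consider the composite problem minimize φ₀(x) + ϑ(f(x)) with φ₀, f twice differentiable at x̄ and ϑ convex piecewise linear-quadratic, and let (x̄, λ̄) solve the KKT system ∇_x L(x̄,λ̄) = 0, λ̄ ∈ ∂ϑ(f(x̄)). Then the Lagrange multiplier set Λ(x̄, v̄) with v̄ = −∇φ₀(x̄) is the singleton {λ̄} if and only if K_ϑ(f(x̄), λ̄)* ∩ ker ∇f(x̄)* = {0}, where K_ϑ(f(x̄),λ̄) = {u : dϑ(f(x̄))(u) = ⟨u, λ̄⟩} is the critical cone of ϑ and C* denotes the polar cone. -/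

import Mathlib

open Filter Topology Metric Set

noncomputable section

abbrev Euc (n : ℕ) := EuclideanSpace ℝ (Fin n)

def edom {X : Type*} (φ : X → EReal) : Set X := {x | φ x ≠ ⊤}

section NormedDefs

variable {X Y : Type*} [NormedAddCommGroup X] [NormedSpace ℝ X]
  [NormedAddCommGroup Y] [NormedSpace ℝ Y]

/-- Bouligand (contingent) tangent cone. -/
def tangentConeB (Ω : Set X) (x : X) : Set X :=
  {w | ∃ t : ℕ → ℝ, ∃ wk : ℕ → X, (∀ k, 0 < t k) ∧ Tendsto t atTop (𝓝 0) ∧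
      Tendsto wk atTop (𝓝 w) ∧ ∀ k, x + t k • wk k ∈ Ω}

/-- Second-order tangent set. -/
def secondTangent (Ω : Set X) (x w : X) : Set X :=
  {u | ∃ t : ℕ → ℝ, ∃ uk : ℕ → X, (∀ k, 0 < t k) ∧ Tendsto t atTop (𝓝 0) ∧
      Tendsto uk atTop (𝓝 u) ∧ ∀ k, x + t k • w + ((t k) ^ 2 / 2) • uk k ∈ Ω}

/-- Subderivative (first-order epi-derivative). -/
def subderiv (φ : X → EReal) (x w : X) : EReal :=
  liminf (fun p : ℝ × X => ((p.1⁻¹ : ℝ) : EReal) * (φ (x + p.1 • p.2) - φ x))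
    ((𝓝[>] (0:ℝ)) ×ˢ 𝓝 w)

/-- `f` is twice differentiable at `x`: differentiable nearby and its derivative is
differentiable at `x`. -/
def TwiceDiffAt (f : X → Y) (x : X) : Prop :=
  (∀ᶠ y in 𝓝 x, DifferentiableAt ℝ f y) ∧ DifferentiableAt ℝ (fderiv ℝ f) x

/-- The second derivative of `f` at `x` evaluated at `(w, w)`. -/
def D2 (f : X → Y) (x w : X) : Y := fderiv ℝ (fderiv ℝ f) x w w

/-- Lipschitz continuity of `φ` around `x` relative to its domain, with constant `ℓ`. -/
def LipRelDom (φ : X → EReal) (x : X) (ℓ : ℝ) : Prop :=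
  ∃ U ∈ 𝓝 x, ∀ y ∈ U, ∀ z ∈ U, φ y ≠ ⊤ → φ z ≠ ⊤ →
    φ y ≤ φ z + ((ℓ * ‖y - z‖ : ℝ) : EReal)

/-- Metric subregularity of the mapping `x ↦ f x - D` at `(x, 0)` with constant `κ`:
the metric subregularity qualification condition. -/
def MSQCAt (f : X → Y) (D : Set Y) (x : X) (κ : ℝ) : Prop :=
  0 ≤ κ ∧ ∀ᶠ u in 𝓝 x, Metric.infDist u (f ⁻¹' D) ≤ κ * Metric.infDist (f u) D

/-- Epigraph of an extended-real-valued function. -/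
def epiSet (ϑ : Y → EReal) : Set (Y × ℝ) := {p | ϑ p.1 ≤ (p.2 : EReal)}

end NormedDefs

section InnerDefs

variable {X : Type*} [NormedAddCommGroup X] [InnerProductSpace ℝ X]

/-- Regular (Fréchet) subdifferential. -/
def frechetSubdiff (φ : X → EReal) (x : X) : Set X :=
  {v | ∀ ε : ℝ, 0 < ε → ∀ᶠ y in 𝓝 x,
      φ x + (((inner ℝ v (y - x) : ℝ) - ε * ‖y - x‖ : ℝ) : EReal) ≤ φ y}

/-- Limiting (Mordukhovich) subdifferential. -/
def limSubdiff (φ : X → EReal) (x : X) : Set X :=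
  {v | ∃ xk : ℕ → X, ∃ vk : ℕ → X, Tendsto xk atTop (𝓝 x) ∧
      Tendsto (fun k => φ (xk k)) atTop (𝓝 (φ x)) ∧
      Tendsto vk atTop (𝓝 v) ∧ ∀ k, vk k ∈ frechetSubdiff φ (xk k)}

/-- Proximal subdifferential. -/
def proxSubdiff (φ : X → EReal) (x : X) : Set X :=
  {v | ∃ r > (0:ℝ), ∃ γ > (0:ℝ), ∀ y ∈ Metric.ball x γ,
      φ x + (((inner ℝ v (y - x) : ℝ) - r / 2 * ‖y - x‖ ^ 2 : ℝ) : EReal) ≤ φ y}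

/-- Second-order difference quotient. -/
def quadDiff (φ : X → EReal) (x v : X) (t : ℝ) (u : X) : EReal :=
  ((2 / t ^ 2 : ℝ) : EReal) * (φ (x + t • u) - φ x - ((t * (inner ℝ v u : ℝ) : ℝ) : EReal))

/-- Second subderivative of `φ` at `x` for `v`. -/
def secondSubderiv (φ : X → EReal) (x v w : X) : EReal :=
  liminf (fun p : ℝ × X => quadDiff φ x v p.1 p.2) ((𝓝[>] (0:ℝ)) ×ˢ 𝓝 w)

/-- Parabolic subderivative of `φ` at `x` for `w` with respect to `z`. -/
def parabolicSubderiv (φ : X → EReal) (x w z : X) : EReal :=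
  liminf (fun p : ℝ × X =>
      ((2 / p.1 ^ 2 : ℝ) : EReal) *
        (φ (x + p.1 • w + (p.1 ^ 2 / 2) • p.2) - φ x - (p.1 : EReal) * subderiv φ x w))
    ((𝓝[>] (0:ℝ)) ×ˢ 𝓝 z)

/-- Critical cone of `φ` at `x` for `v`. -/
def critCone (φ : X → EReal) (x v : X) : Set X :=
  {w | subderiv φ x w = ((inner ℝ v w : ℝ) : EReal)}

/-- Convex polyhedral set. -/
def IsPolyhedral (Ω : Set X) : Prop :=
  ∃ (k : ℕ) (c : Fin k → X) (b : Fin k → ℝ), Ω = {x | ∀ i, (inner ℝ (c i) x : ℝ) ≤ b i}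

/-- Polar cone. -/
def polarCone (C : Set X) : Set X := {y | ∀ u ∈ C, (inner ℝ y u : ℝ) ≤ 0}

/-- A piecewise linear-quadratic representation of `ϑ`. -/
structure PLQRepr (ϑ : X → EReal) where
  s : ℕ
  piece : Fin s → Set X
  A : Fin s → (X →L[ℝ] X)
  a : Fin s → X
  cst : Fin s → ℝ
  poly : ∀ i, IsPolyhedral (piece i)
  symm : ∀ i x y, (inner ℝ (A i x) y : ℝ) = (inner ℝ x (A i y) : ℝ)
  dom_eq : edom ϑ = ⋃ i, piece i
  val : ∀ i, ∀ x ∈ piece i,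
    ϑ x = ((1 / 2 * (inner ℝ (A i x) x : ℝ) + (inner ℝ (a i) x : ℝ) + cst i : ℝ) : EReal)

/-- `ϑ` is piecewise linear-quadratic. -/
def IsPLQ (ϑ : X → EReal) : Prop := Nonempty (PLQRepr ϑ)

/-- Twice epi-differentiability of `φ` at `x` for `v`, via the recovery-sequence
characterization of epi-convergence of second-order difference quotients. -/
def TwiceEpiDiffAt (φ : X → EReal) (x v : X) : Prop :=
  ∀ w : X, ∀ t : ℕ → ℝ, (∀ k, 0 < t k) → Tendsto t atTop (𝓝 0) →
    ∃ wk : ℕ → X, Tendsto wk atTop (𝓝 w) ∧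
      Tendsto (fun k => quadDiff φ x v (t k) (wk k)) atTop (𝓝 (secondSubderiv φ x v w))

end InnerDefs

/-- Convexity for extended-real-valued functions. -/
def ERealConvexOn {X : Type*} [AddCommGroup X] [Module ℝ X] (φ : X → EReal) : Prop :=
  ∀ x y : X, ∀ t : ℝ, 0 ≤ t → t ≤ 1 →
    φ (t • x + (1 - t) • y) ≤ (t : EReal) * φ x + ((1 - t : ℝ) : EReal) * φ y

/-- The Lagrange multiplier set associated with `(x, v)` for the composition `ϑ ∘ f`. -/
def multSet {n m : ℕ} (f : Euc n → Euc m) (ϑ : Euc m → EReal) (x : Euc n) (v : Euc n) :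
    Set (Euc m) :=
  {lam | lam ∈ limSubdiff ϑ (f x) ∧ ContinuousLinearMap.adjoint (fderiv ℝ f x) lam = v}


/-!
Write `ȳ = f x̄` and `K = critCone ϑ ȳ λ̄`. Since `Λ(x̄, v̄) = (λ̄ + ker ∇f(x̄)*) ∩ ∂ϑ(ȳ)`, the
equivalence follows from two facts about the convex piecewise linear-quadratic `ϑ`:
every `λ ∈ ∂ϑ(ȳ)` has `λ - λ̄ ∈ K*`, and every `u ∈ K*` has `λ̄ + ε u ∈ ∂ϑ(ȳ)` for some `ε > 0`.

By convexity, limiting subgradients are global subgradients, so `⟪λ, w⟫ ≤ dϑ(ȳ)(w) = ⟪λ̄, w⟫`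
on `K`, which is the first fact. For the second, a ray `ȳ + t z` stays for small `t > 0` in a
single piece `Pᵢ ∋ ȳ` with quadratic `qᵢ`, and then `ϑ(ȳ + z) - ϑ(ȳ) ≥ ⟪∇qᵢ(ȳ), z⟫` by
convexity. Feasible directions `z` of `Pᵢ` with `⟪∇qᵢ(ȳ) - λ̄, z⟫ ≤ 0` are critical, so by
Farkas' lemma (the feasible directions form a polyhedral cone) there is `νᵢ ≥ 0` with
`⟪u, z⟫ ≤ νᵢ ⟪∇qᵢ(ȳ) - λ̄, z⟫` on them; `ε = (1 + ∑ νᵢ)⁻¹` then works for every piece.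
Farkas' lemma is proved by induction on the number of generators, projecting along the last
one, which avoids the closedness of finitely generated cones.
-/

open scoped RealInnerProductSpace

theorem tendsto_add_smul_nhdsGT_zero {F : Type*} [NormedAddCommGroup F] [NormedSpace ℝ F]
    (x z : F) : Tendsto (fun t : ℝ => x + t • z) (𝓝[>] 0) (𝓝 x) := by
  have hcont : Continuous fun t : ℝ => x + t • z := by fun_prop
  simpa using (hcont.tendsto 0).mono_left nhdsWithin_le_nhds

theorem eventually_add_mul_le_iff {α β b : ℝ} (h : α ≤ b) :
    (∀ᶠ t in 𝓝[>] (0 : ℝ), α + t * β ≤ b) ↔ (α = b → β ≤ 0) := by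
  constructor
  · rintro hev rfl
    obtain ⟨t, hle, ht⟩ := (hev.and self_mem_nhdsWithin).exists
    exact le_of_not_gt fun hβ => by nlinarith [mul_pos (show (0 : ℝ) < t from ht) hβ]
  · intro hβ
    rcases h.lt_or_eq with hlt | rfl
    · have := (tendsto_add_smul_nhdsGT_zero α β).eventually (gt_mem_nhds hlt)
      simp only [smul_eq_mul] at this
      exact this.mono fun _ => le_of_lt
    · filter_upwards [self_mem_nhdsWithin] with t (ht : 0 < t)
      nlinarith [hβ rfl]

theorem eventually_add_mul_le_or_eventually_lt (α β b : ℝ) :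
    (∀ᶠ t in 𝓝[>] (0 : ℝ), α + t * β ≤ b) ∨ ∀ᶠ t in 𝓝[>] (0 : ℝ), b < α + t * β := by
  rcases le_or_gt α b with h | h
  · by_cases hβ : α = b → β ≤ 0
    · exact .inl ((eventually_add_mul_le_iff h).2 hβ)
    · obtain ⟨rfl, hpos⟩ := Classical.not_imp.1 hβ
      refine .inr ?_
      filter_upwards [self_mem_nhdsWithin] with t (ht : 0 < t)
      nlinarith [mul_pos ht (lt_of_not_ge hpos)]
  · exact .inr (by simpa using (tendsto_add_smul_nhdsGT_zero α β).eventually (lt_mem_nhds h))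

section

variable {E : Type*} [NormedAddCommGroup E] [InnerProductSpace ℝ E]

theorem exists_nonneg_sum_eq_of_forall_inner_nonpos :
    ∀ {N : ℕ} (c : Fin N → E) (u : E), (∀ z, (∀ j, ⟪c j, z⟫ ≤ 0) → ⟪u, z⟫ ≤ 0) →
      ∃ μ : Fin N → ℝ, (∀ j, 0 ≤ μ j) ∧ u = ∑ j, μ j • c j
  | 0, _, u, h => ⟨0, fun _ => le_rfl, by simpa using real_inner_self_nonpos.1 (h u finZeroElim)⟩
  | N + 1, c, u, h => by
    set a := c (Fin.last N)
    by_cases h₀ : ∀ z, (∀ j : Fin N, ⟪c j.castSucc, z⟫ ≤ 0) → ⟪u, z⟫ ≤ 0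
    · obtain ⟨μ, hμ, rfl⟩ := exists_nonneg_sum_eq_of_forall_inner_nonpos _ u h₀
      refine ⟨Fin.snoc μ 0, fun j => ?_, by simp [Fin.sum_univ_castSucc]⟩
      cases j using Fin.lastCases <;> simp [hμ]
    obtain ⟨z, hz, huz⟩ : ∃ z, (∀ j : Fin N, ⟪c j.castSucc, z⟫ ≤ 0) ∧ 0 < ⟪u, z⟫ := by
      simpa using h₀
    have haz : 0 < ⟪a, z⟫ := by
      by_contra! haz
      exact (h z (Fin.lastCases haz hz)).not_gt huz
    -- Project the other generators and `u` along `a` onto the hyperplane `⟪a, ·⟫ = 0`: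
    -- a vector `w` separating the projected system yields `⟪a, z⟫ • w - ⟪a, w⟫ • z` for `c, u`.
    obtain ⟨μ, hμ, hu⟩ := exists_nonneg_sum_eq_of_forall_inner_nonpos
        (fun j => ⟪a, z⟫ • c j.castSucc - ⟪c j.castSucc, z⟫ • a) (⟪a, z⟫ • u - ⟪u, z⟫ • a)
        fun w hw => by
      have hlast : ⟪a, ⟪a, z⟫ • w - ⟪a, w⟫ • z⟫ ≤ 0 := by
        simp only [inner_sub_right, real_inner_smul_right]
        exact (sub_eq_zero.2 (mul_comm _ _)).le
      have hrest : ∀ j : Fin N, ⟪c j.castSucc, ⟪a, z⟫ • w - ⟪a, w⟫ • z⟫ ≤ 0 := fun j => by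
        refine le_of_eq_of_le ?_ (hw j)
        simp only [inner_sub_left, inner_sub_right, real_inner_smul_left, real_inner_smul_right]
        ring
      refine le_of_eq_of_le ?_ (h _ (Fin.lastCases hlast hrest))
      simp only [inner_sub_left, inner_sub_right, real_inner_smul_left, real_inner_smul_right]
      ring
    set σ := ∑ j, μ j * ⟪c j.castSucc, z⟫
    have hσ : σ ≤ 0 := Finset.sum_nonpos fun j _ => mul_nonpos_of_nonneg_of_nonpos (hμ j) (hz j)
    refine ⟨Fin.snoc μ ((⟪u, z⟫ - σ) / ⟪a, z⟫), fun j => ?_, ?_⟩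
    · cases j using Fin.lastCases
      · simpa using div_nonneg (by linarith) haz.le
      · simp [hμ]
    · have hsum : ∑ j, μ j • (⟪a, z⟫ • c j.castSucc - ⟪c j.castSucc, z⟫ • a)
          = ⟪a, z⟫ • ∑ j, μ j • c j.castSucc - σ • a := by
        simp only [smul_sub, Finset.sum_sub_distrib, Finset.smul_sum, Finset.sum_smul, smul_smul,
          mul_comm, σ]
      refine smul_right_injective E haz.ne' ?_
      simp only [Fin.sum_univ_castSucc, Fin.snoc_castSucc, Fin.snoc_last, smul_add, smul_smul,
        mul_div_cancel₀ _ haz.ne']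
      rw [hsum] at hu
      linear_combination (norm := module) hu

def IsSubgradient (φ : E → EReal) (x v : E) : Prop :=
  ∀ z, φ x + (⟪v, z - x⟫ : EReal) ≤ φ z

theorem frechetSubdiff_subset_limSubdiff (φ : E → EReal) (x : E) :
    frechetSubdiff φ x ⊆ limSubdiff φ x := fun v hv =>
  ⟨fun _ => x, fun _ => v, tendsto_const_nhds, tendsto_const_nhds, tendsto_const_nhds,
    fun _ => hv⟩

theorem IsSubgradient.mem_frechetSubdiff {φ : E → EReal} {x v : E} (h : IsSubgradient φ x v) :
    v ∈ frechetSubdiff φ x := fun ε hε => Eventually.of_forall fun y =>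
  (add_le_add le_rfl (EReal.coe_le_coe_iff.2 (sub_le_self _ (by positivity)))).trans (h y)

theorem ERealConvexOn.apply_add_smul_le {φ : E → EReal} (hconv : ERealConvexOn φ) {x z : E}
    {r s : ℝ} (hx : φ x = r) (hz : φ (x + z) = s) {t : ℝ} (ht₀ : 0 ≤ t) (ht₁ : t ≤ 1) :
    φ (x + t • z) ≤ ((r + t * (s - r) : ℝ) : EReal) := by
  have h := hconv (x + z) x t ht₀ ht₁
  rwa [show t • (x + z) + (1 - t) • x = x + t • z by module, hx, hz, ← EReal.coe_mul,
    ← EReal.coe_mul, ← EReal.coe_add, show t * s + (1 - t) * r = r + t * (s - r) by ring] at h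

theorem ERealConvexOn.isSubgradient_of_mem_frechetSubdiff {φ : E → EReal}
    (hconv : ERealConvexOn φ) (hbot : ∀ y, φ y ≠ ⊥) {x v : E} {r : ℝ} (hx : φ x = r)
    (hv : v ∈ frechetSubdiff φ x) : IsSubgradient φ x v := by
  intro z
  rcases eq_or_ne (φ z) ⊤ with hz | hz
  · exact hz ▸ le_top
  obtain ⟨s, hs⟩ : ∃ s : ℝ, φ z = s := ⟨_, (EReal.coe_toReal hz (hbot z)).symm⟩
  have hs' : φ (x + (z - x)) = s := by rwa [add_sub_cancel]
  -- Compare the Fréchet lower bound with the convexity upper bound on `[x, z]` close to `x`.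
  have key : ∀ ε > 0, ⟪v, z - x⟫ ≤ (s - r) + ε * ‖z - x‖ := by
    intro ε hε
    obtain ⟨t, hfre, ht⟩ := (((tendsto_add_smul_nhdsGT_zero x (z - x)).eventually (hv ε hε)).and
      (Ioc_mem_nhdsGT zero_lt_one)).exists
    have hle := hfre.trans (hconv.apply_add_smul_le hx hs' ht.1.le ht.2)
    rw [hx, ← EReal.coe_add, EReal.coe_le_coe_iff, add_sub_cancel_left, real_inner_smul_right,
      norm_smul, Real.norm_of_nonneg ht.1.le] at hle
    nlinarith [ht.1]
  have hlim := ge_of_tendsto (tendsto_add_smul_nhdsGT_zero (s - r) ‖z - x‖)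
    (eventually_nhdsWithin_of_forall key)
  rw [hx, hs, ← EReal.coe_add, EReal.coe_le_coe_iff]
  linarith

theorem ERealConvexOn.isSubgradient_of_mem_limSubdiff {φ : E → EReal}
    (hconv : ERealConvexOn φ) (hbot : ∀ y, φ y ≠ ⊥) {x v : E} {r : ℝ} (hx : φ x = r)
    (hv : v ∈ limSubdiff φ x) : IsSubgradient φ x v := by
  obtain ⟨xk, vk, hxk, hφk, hvk, hfk⟩ := hv
  intro z
  rcases eq_or_ne (φ z) ⊤ with hz | hz
  · exact hz ▸ le_top
  obtain ⟨s, hs⟩ : ∃ s : ℝ, φ z = s := ⟨_, (EReal.coe_toReal hz (hbot z)).symm⟩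
  rw [hx] at hφk
  have hreal : Tendsto (fun k => (φ (xk k)).toReal) atTop (𝓝 r) := by
    simpa [Function.comp_def] using
      (EReal.tendsto_toReal (EReal.coe_ne_top r) (EReal.coe_ne_bot r)).comp hφk
  have hineq : ∀ᶠ k in atTop, (φ (xk k)).toReal + ⟪vk k, z - xk k⟫ ≤ s := by
    filter_upwards [hφk.eventually_ne (EReal.coe_ne_top r)] with k hk
    have := hconv.isSubgradient_of_mem_frechetSubdiff hbot
      (EReal.coe_toReal hk (hbot _)).symm (hfk k) z
    rwa [hs, ← EReal.coe_toReal hk (hbot _), ← EReal.coe_add, EReal.coe_le_coe_iff] at this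
  rw [hx, hs, ← EReal.coe_add, EReal.coe_le_coe_iff]
  exact le_of_tendsto (hreal.add (hvk.inner (tendsto_const_nhds.sub hxk))) hineq

theorem IsSubgradient.inner_le_subderiv {φ : E → EReal} {x v : E} {r : ℝ} (hx : φ x = r)
    (h : IsSubgradient φ x v) (w : E) : (⟪v, w⟫ : EReal) ≤ subderiv φ x w := by
  have hlim : Tendsto (fun p : ℝ × E => (⟪v, p.2⟫ : EReal)) (𝓝[>] 0 ×ˢ 𝓝 w) (𝓝 ⟪v, w⟫) :=
    EReal.tendsto_coe.2 ((continuous_const.inner continuous_id).tendsto w |>.comp tendsto_snd)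
  rw [subderiv, ← hlim.liminf_eq]
  refine liminf_le_liminf ?_
  filter_upwards [tendsto_fst.eventually self_mem_nhdsWithin] with ⟨t, w'⟩ (ht : 0 < t)
  have hsub := h (x + t • w')
  rw [hx, add_sub_cancel_left, real_inner_smul_right] at hsub
  rw [hx]
  generalize φ (x + t • w') = y at hsub ⊢
  induction y using EReal.rec with
  | bot => exact absurd (le_bot_iff.1 hsub) (by rw [← EReal.coe_add]; exact EReal.coe_ne_bot _)
  | top => simp [EReal.coe_mul_top_of_pos (inv_pos.2 ht)]
  | coe s =>
    rw [← EReal.coe_add, EReal.coe_le_coe_iff] at hsub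
    rw [← EReal.coe_sub, ← EReal.coe_mul, EReal.coe_le_coe_iff, le_inv_mul_iff₀ ht]
    linarith

theorem subderiv_le_liminf (φ : E → EReal) (x w : E) :
    subderiv φ x w ≤ liminf (fun t : ℝ => ((t⁻¹ : ℝ) : EReal) * (φ (x + t • w) - φ x)) (𝓝[>] 0) :=
  (liminf_le_liminf_of_le (tendsto_id.prodMk tendsto_const_nhds)).trans_eq
    (liminf_comp _ _ _).symm

theorem subderiv_eq_bot_of_eq_top {φ : E → EReal} {x : E} (hx : φ x = ⊤) (w : E) :
    subderiv φ x w = ⊥ := by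
  simp only [subderiv, hx, EReal.sub_top]
  refine (liminf_congr ?_).trans (liminf_const ⊥)
  filter_upwards [tendsto_fst.eventually self_mem_nhdsWithin] with p (hp : 0 < p.1)
  exact EReal.coe_mul_bot_of_pos (inv_pos.2 hp)


def IsFeasibleDirection (P : Set E) (y z : E) : Prop :=
  ∀ᶠ t in 𝓝[>] (0 : ℝ), y + t • z ∈ P

theorem IsPolyhedral.isClosed {P : Set E} (hP : IsPolyhedral P) : IsClosed P := by
  obtain ⟨k, c, b, rfl⟩ := hP
  simp only [ofPred_forall]
  exact isClosed_iInter fun j => isClosed_le (by fun_prop) continuous_const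

theorem isFeasibleDirection_setOf_inner_le_iff {k : ℕ} {c : Fin k → E} {b : Fin k → ℝ} {y : E}
    (hy : ∀ j, ⟪c j, y⟫ ≤ b j) (z : E) :
    IsFeasibleDirection {x | ∀ j, ⟪c j, x⟫ ≤ b j} y z ↔ ∀ j, ⟪c j, y⟫ = b j → ⟪c j, z⟫ ≤ 0 := by
  simp only [IsFeasibleDirection, mem_ofPred_eq, inner_add_right, real_inner_smul_right,
    eventually_all]
  exact forall_congr' fun j => eventually_add_mul_le_iff (hy j)

theorem IsPolyhedral.isFeasibleDirection_or_eventually_notMem {P : Set E} (hP : IsPolyhedral P)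
    (y z : E) : IsFeasibleDirection P y z ∨ ∀ᶠ t in 𝓝[>] (0 : ℝ), y + t • z ∉ P := by
  obtain ⟨k, c, b, rfl⟩ := hP
  simp only [IsFeasibleDirection, mem_ofPred_eq, inner_add_right, real_inner_smul_right,
    eventually_all]
  by_cases h : ∀ j, ∀ᶠ t in 𝓝[>] (0 : ℝ), ⟪c j, y⟫ + t * ⟪c j, z⟫ ≤ b j
  · exact .inl h
  · obtain ⟨j, hj⟩ := not_forall.1 h
    refine .inr ?_
    filter_upwards [(eventually_add_mul_le_or_eventually_lt _ _ _).resolve_left hj] with t ht hall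
    exact (hall j).not_gt ht

theorem exists_inner_le_mul_of_forall_inner_nonpos {k : ℕ} (c : Fin k → E) (p : Fin k → Prop)
    (d u : E) (h : ∀ z, (∀ j, p j → ⟪c j, z⟫ ≤ 0) → ⟪d, z⟫ ≤ 0 → ⟪u, z⟫ ≤ 0) :
    ∃ ν, 0 ≤ ν ∧ ∀ z, (∀ j, p j → ⟪c j, z⟫ ≤ 0) → ⟪u, z⟫ ≤ ν * ⟪d, z⟫ := by
  classical
  -- Constraints outside `p` are replaced by the trivial one `⟪0, z⟫ ≤ 0`.
  set c' : Fin k → E := fun j => if p j then c j else 0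
  have hc' : ∀ z, (∀ j, ⟪c' j, z⟫ ≤ 0) ↔ ∀ j, p j → ⟪c j, z⟫ ≤ 0 := fun z =>
    forall_congr' fun j => by by_cases hj : p j <;> simp [c', hj]
  obtain ⟨μ, hμ, rfl⟩ := exists_nonneg_sum_eq_of_forall_inner_nonpos (Fin.snoc c' d) u
    fun z hz => h z ((hc' z).1 fun j => by simpa using hz j.castSucc)
      (by simpa using hz (Fin.last k))
  refine ⟨μ (Fin.last k), hμ _, fun z hz => ?_⟩
  have hsum : ∑ j : Fin k, μ j.castSucc * ⟪c' j, z⟫ ≤ 0 :=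
    Finset.sum_nonpos fun j _ => mul_nonpos_of_nonneg_of_nonpos (hμ _) ((hc' z).2 hz j)
  simp only [Fin.sum_univ_castSucc, Fin.snoc_castSucc, Fin.snoc_last, inner_add_left, sum_inner,
    real_inner_smul_left]
  linarith

theorem IsPolyhedral.exists_inner_le_mul {P : Set E} (hP : IsPolyhedral P) {y : E} (hy : y ∈ P)
    (d u : E) (h : ∀ z, IsFeasibleDirection P y z → ⟪d, z⟫ ≤ 0 → ⟪u, z⟫ ≤ 0) :
    ∃ ν, 0 ≤ ν ∧ ∀ z, IsFeasibleDirection P y z → ⟪u, z⟫ ≤ ν * ⟪d, z⟫ := by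
  obtain ⟨k, c, b, rfl⟩ := hP
  simp only [isFeasibleDirection_setOf_inner_le_iff hy] at h ⊢
  exact exists_inner_le_mul_of_forall_inner_nonpos c _ d u h

namespace PLQRepr

variable {ϑ : E → EReal}

theorem isClosed_edom (R : PLQRepr ϑ) : IsClosed (edom ϑ) :=
  R.dom_eq ▸ isClosed_iUnion_of_finite fun i => (R.poly i).isClosed

theorem mem_frechetSubdiff_of_eq_top (R : PLQRepr ϑ) {y : E} (hy : ϑ y = ⊤) (v : E) :
    v ∈ frechetSubdiff ϑ y := by
  intro ε _
  filter_upwards [R.isClosed_edom.isOpen_compl.mem_nhds (by simpa [edom] using hy)] with z hz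
  simp only [edom, mem_compl_iff, mem_ofPred_eq, not_not] at hz
  exact hz ▸ le_top

theorem apply_add_smul_eq (R : PLQRepr ϑ) {i : Fin R.s} {y z : E} {r : ℝ} (hy : y ∈ R.piece i)
    (hr : ϑ y = r) {t : ℝ} (ht : y + t • z ∈ R.piece i) :
    ϑ (y + t • z) = ((r + t * (⟪R.A i y + R.a i, z⟫ + t * (⟪R.A i z, z⟫ / 2)) : ℝ) : EReal) := by
  have hr' := R.val i y hy
  rw [hr, EReal.coe_eq_coe_iff] at hr'
  rw [R.val i _ ht, EReal.coe_eq_coe_iff, hr', map_add, map_smul]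
  have hsymm : ⟪R.A i z, y⟫ = ⟪R.A i y, z⟫ := by rw [R.symm, real_inner_comm]
  simp only [inner_add_left, inner_add_right, real_inner_smul_left, real_inner_smul_right, hsymm]
  ring

theorem subderiv_le_inner_of_isFeasibleDirection (R : PLQRepr ϑ) {i : Fin R.s} {y z : E} {r : ℝ}
    (hy : y ∈ R.piece i) (hr : ϑ y = r) (hz : IsFeasibleDirection (R.piece i) y z) :
    subderiv ϑ y z ≤ (⟪R.A i y + R.a i, z⟫ : EReal) := by
  refine (subderiv_le_liminf ϑ y z).trans_eq (Tendsto.liminf_eq ?_)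
  have hlim := (tendsto_add_smul_nhdsGT_zero ⟪R.A i y + R.a i, z⟫ (⟪R.A i z, z⟫ / 2))
  refine (EReal.tendsto_coe.2 hlim).congr' ?_
  filter_upwards [hz, self_mem_nhdsWithin] with t ht (htpos : 0 < t)
  rw [R.apply_add_smul_eq hy hr ht, hr, ← EReal.coe_sub, ← EReal.coe_mul, EReal.coe_eq_coe_iff,
    smul_eq_mul]
  field_simp
  ring

theorem inner_le_sub_of_isFeasibleDirection (R : PLQRepr ϑ) {i : Fin R.s} {y z : E} {r s : ℝ}
    (hconv : ERealConvexOn ϑ) (hy : y ∈ R.piece i) (hr : ϑ y = r) (hs : ϑ (y + z) = s)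
    (hz : IsFeasibleDirection (R.piece i) y z) : ⟪R.A i y + R.a i, z⟫ ≤ s - r := by
  refine le_of_tendsto (tendsto_add_smul_nhdsGT_zero _ (⟪R.A i z, z⟫ / 2)) ?_
  filter_upwards [hz, Ioc_mem_nhdsGT zero_lt_one] with t ht ht'
  have hle := hconv.apply_add_smul_le hr hs ht'.1.le ht'.2
  rw [R.apply_add_smul_eq hy hr ht, EReal.coe_le_coe_iff] at hle
  rw [smul_eq_mul]
  nlinarith [ht'.1]

theorem exists_isFeasibleDirection (R : PLQRepr ϑ) {y z : E}
    (hz : ∀ᶠ t in 𝓝[>] (0 : ℝ), y + t • z ∈ edom ϑ) :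
    ∃ i, y ∈ R.piece i ∧ IsFeasibleDirection (R.piece i) y z := by
  obtain ⟨i, hi⟩ : ∃ i, IsFeasibleDirection (R.piece i) y z := by
    by_contra! hno
    have hout := fun i =>
      ((R.poly i).isFeasibleDirection_or_eventually_notMem y z).resolve_left (hno i)
    obtain ⟨t, hdom, hnot⟩ := (hz.and (eventually_all.2 hout)).exists
    rw [R.dom_eq] at hdom
    obtain ⟨i, hi⟩ := mem_iUnion.1 hdom
    exact hnot i hi
  exact ⟨i, (R.poly i).isClosed.mem_of_tendsto (tendsto_add_smul_nhdsGT_zero y z) hi, hi⟩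

theorem inner_sub_nonneg_of_isSubgradient (R : PLQRepr ϑ) {i : Fin R.s} {y z lamb : E} {r : ℝ}
    (hy : y ∈ R.piece i) (hr : ϑ y = r) (hsub : IsSubgradient ϑ y lamb)
    (hz : IsFeasibleDirection (R.piece i) y z) : 0 ≤ ⟪R.A i y + R.a i - lamb, z⟫ := by
  have h := (hsub.inner_le_subderiv hr z).trans
    (R.subderiv_le_inner_of_isFeasibleDirection hy hr hz)
  rw [EReal.coe_le_coe_iff] at h
  rw [inner_sub_left]
  linarith

theorem mem_critCone (R : PLQRepr ϑ) {i : Fin R.s} {y z lamb : E} {r : ℝ}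
    (hy : y ∈ R.piece i) (hr : ϑ y = r) (hsub : IsSubgradient ϑ y lamb)
    (hz : IsFeasibleDirection (R.piece i) y z) (hd : ⟪R.A i y + R.a i - lamb, z⟫ ≤ 0) :
    z ∈ critCone ϑ y lamb := by
  rw [inner_sub_left, sub_nonpos] at hd
  exact le_antisymm ((R.subderiv_le_inner_of_isFeasibleDirection hy hr hz).trans
    (EReal.coe_le_coe_iff.2 hd)) (hsub.inner_le_subderiv hr z)

theorem exists_inner_le_mul_of_mem_polarCone (R : PLQRepr ϑ) {y lamb u : E} {r : ℝ}
    (hr : ϑ y = r) (hsub : IsSubgradient ϑ y lamb) (hu : u ∈ polarCone (critCone ϑ y lamb)) :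
    ∃ ν, 0 ≤ ν ∧ ∀ i z, y ∈ R.piece i → IsFeasibleDirection (R.piece i) y z →
      ⟪u, z⟫ ≤ ν * ⟪R.A i y + R.a i - lamb, z⟫ := by
  have hpiece : ∀ i, ∃ ν, 0 ≤ ν ∧ ∀ z, y ∈ R.piece i → IsFeasibleDirection (R.piece i) y z →
      ⟪u, z⟫ ≤ ν * ⟪R.A i y + R.a i - lamb, z⟫ := by
    intro i
    by_cases hy : y ∈ R.piece i
    · obtain ⟨ν, hν, h⟩ := (R.poly i).exists_inner_le_mul hy _ u
        fun z hz hd => hu z (R.mem_critCone hy hr hsub hz hd)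
      exact ⟨ν, hν, fun z _ => h z⟩
    · exact ⟨0, le_rfl, fun z hy' => absurd hy' hy⟩
  choose ν hν₀ hν using hpiece
  refine ⟨∑ i, ν i, Finset.sum_nonneg fun i _ => hν₀ i, fun i z hy hz => (hν i z hy hz).trans ?_⟩
  exact mul_le_mul_of_nonneg_right (Finset.single_le_sum (fun j _ => hν₀ j) (Finset.mem_univ i))
    (R.inner_sub_nonneg_of_isSubgradient hy hr hsub hz)

end PLQRepr

theorem ERealConvexOn.sub_mem_polarCone_critCone {ϑ : E → EReal} (hconv : ERealConvexOn ϑ)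
    (hbot : ∀ y, ϑ y ≠ ⊥) {y lam : E} (hlam : lam ∈ limSubdiff ϑ y) (lamb : E) :
    lam - lamb ∈ polarCone (critCone ϑ y lamb) := by
  intro w hw
  rcases eq_or_ne (ϑ y) ⊤ with htop | hfin
  · exact absurd (hw.symm.trans (subderiv_eq_bot_of_eq_top htop w)) (EReal.coe_ne_bot _)
  obtain ⟨r, hr⟩ : ∃ r : ℝ, ϑ y = r := ⟨_, (EReal.coe_toReal hfin (hbot y)).symm⟩
  have h := (hconv.isSubgradient_of_mem_limSubdiff hbot hr hlam).inner_le_subderiv hr w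
  rw [hw, EReal.coe_le_coe_iff] at h
  rw [inner_sub_left]
  linarith

theorem ERealConvexOn.exists_add_smul_mem_limSubdiff {ϑ : E → EReal} (hconv : ERealConvexOn ϑ)
    (hbot : ∀ y, ϑ y ≠ ⊥) (R : PLQRepr ϑ) {y lamb u : E} (hlamb : lamb ∈ limSubdiff ϑ y)
    (hu : u ∈ polarCone (critCone ϑ y lamb)) : ∃ ε : ℝ, 0 < ε ∧ lamb + ε • u ∈ limSubdiff ϑ y := by
  rcases eq_or_ne (ϑ y) ⊤ with htop | hfin
  · exact ⟨1, one_pos, frechetSubdiff_subset_limSubdiff _ _ (R.mem_frechetSubdiff_of_eq_top htop _)⟩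
  obtain ⟨r, hr⟩ : ∃ r : ℝ, ϑ y = r := ⟨_, (EReal.coe_toReal hfin (hbot y)).symm⟩
  have hsub := hconv.isSubgradient_of_mem_limSubdiff hbot hr hlamb
  obtain ⟨ν, hν₀, hν⟩ := R.exists_inner_le_mul_of_mem_polarCone hr hsub hu
  refine ⟨(1 + ν)⁻¹, by positivity, frechetSubdiff_subset_limSubdiff _ _ <|
    IsSubgradient.mem_frechetSubdiff fun x => ?_⟩
  rcases eq_or_ne (ϑ x) ⊤ with hx | hx
  · exact hx ▸ le_top
  obtain ⟨s, hs⟩ : ∃ s : ℝ, ϑ x = s := ⟨_, (EReal.coe_toReal hx (hbot x)).symm⟩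
  have hs' : ϑ (y + (x - y)) = s := by rwa [add_sub_cancel]
  have hdom : ∀ᶠ t in 𝓝[>] (0 : ℝ), y + t • (x - y) ∈ edom ϑ := by
    filter_upwards [Ioc_mem_nhdsGT zero_lt_one] with t ht
    exact ne_top_of_le_ne_top (EReal.coe_ne_top _) (hconv.apply_add_smul_le hr hs' ht.1.le ht.2)
  obtain ⟨i, hy, hfeas⟩ := R.exists_isFeasibleDirection hdom
  have hslope := R.inner_le_sub_of_isFeasibleDirection hconv hy hr hs' hfeas
  have hD := R.inner_sub_nonneg_of_isSubgradient hy hr hsub hfeas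
  have hu' : (1 + ν)⁻¹ * ⟪u, x - y⟫ ≤ ⟪R.A i y + R.a i - lamb, x - y⟫ := by
    rw [inv_mul_le_iff₀ (by positivity)]
    nlinarith [hν i _ hy hfeas]
  rw [inner_sub_left] at hu'
  rw [hr, hs, ← EReal.coe_add, EReal.coe_le_coe_iff, inner_add_left, real_inner_smul_left]
  linarith

end

theorem stmt19_general {n m : ℕ} (φ₀ : Euc n → ℝ) (f : Euc n → Euc m) (ϑ : Euc m → EReal)
    (xb : Euc n) (lamb : Euc m)
    (hbot : ∀ y, ϑ y ≠ ⊥) (hplq : IsPLQ ϑ) (hconv : ERealConvexOn ϑ)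
    (hkkt1 : gradient φ₀ xb + ContinuousLinearMap.adjoint (fderiv ℝ f xb) lamb = 0)
    (hkkt2 : lamb ∈ limSubdiff ϑ (f xb)) :
    multSet f ϑ xb (-gradient φ₀ xb) = {lamb} ↔
      polarCone (critCone ϑ (f xb) lamb) ∩
        {u : Euc m | ContinuousLinearMap.adjoint (fderiv ℝ f xb) u = 0} = {0} := by
  obtain ⟨R⟩ := hplq
  have hlamb : ContinuousLinearMap.adjoint (fderiv ℝ f xb) lamb = -gradient φ₀ xb :=
    eq_neg_of_add_eq_zero_right hkkt1
  constructor
  · intro hM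
    refine eq_singleton_iff_unique_mem.2 ⟨⟨fun w _ => by simp, map_zero _⟩, ?_⟩
    rintro u ⟨hpolar, hker⟩
    obtain ⟨ε, hε, hmem⟩ := hconv.exists_add_smul_mem_limSubdiff hbot R hkkt2 hpolar
    have hmult : lamb + ε • u ∈ multSet f ϑ xb (-gradient φ₀ xb) :=
      ⟨hmem, by rw [map_add, map_smul, hker, smul_zero, add_zero, hlamb]⟩
    rw [hM, mem_singleton_iff, add_eq_left, smul_eq_zero] at hmult
    exact hmult.resolve_left hε.ne'
  · intro hS
    refine eq_singleton_iff_unique_mem.2 ⟨⟨hkkt2, hlamb⟩, ?_⟩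
    rintro lam ⟨hlam, hTlam⟩
    have hdiff : lam - lamb ∈ polarCone (critCone ϑ (f xb) lamb) ∩
        {u : Euc m | ContinuousLinearMap.adjoint (fderiv ℝ f xb) u = 0} :=
      ⟨hconv.sub_mem_polarCone_critCone hbot hlam lamb,
        (map_sub _ _ _).trans (by rw [hTlam, hlamb, sub_self])⟩
    rwa [hS, mem_singleton_iff, sub_eq_zero] at hdiff

/-- characterization of uniqueness of Lagrange multipliers via the strong
Robinson constraint qualification. -/
theorem stmt19 {n m : ℕ} (φ₀ : Euc n → ℝ) (f : Euc n → Euc m) (ϑ : Euc m → EReal)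
    (xb : Euc n) (lamb : Euc m)
    (hφ₀ : TwiceDiffAt φ₀ xb) (hf : TwiceDiffAt f xb)
    (hbot : ∀ y, ϑ y ≠ ⊥) (hplq : IsPLQ ϑ) (hconv : ERealConvexOn ϑ)
    (hkkt1 : gradient φ₀ xb + ContinuousLinearMap.adjoint (fderiv ℝ f xb) lamb = 0)
    (hkkt2 : lamb ∈ limSubdiff ϑ (f xb)) :
    multSet f ϑ xb (-gradient φ₀ xb) = {lamb} ↔
      polarCone (critCone ϑ (f xb) lamb) ∩
        {u : Euc m | ContinuousLinearMap.adjoint (fderiv ℝ f xb) u = 0} = {0} :=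
  stmt19_general φ₀ f ϑ xb lamb hbot hplq hconv hkkt1 hkkt2
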